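/- arXiv:1811.09606 — 6 statements merged into one kernel-verified Lean document; each statement's English description precedes it below -/
import Mathlib

section
/- For every m ≥ 1, any set of cells in a 2m×2m board with no two cells diagonally adjacent has cardinality at most 2m². -/
/-- Two cells are diagonally adjacent (a pawn attack) if their rows and
columns each differ by exactly 1. -/
def PawnAdj {a b : ℕ} (p q : Fin a × Fin b) : Prop :=
  |((p.1 : ℕ) : ℤ) - ((q.1 : ℕ) : ℤ)| = 1 ∧ |((p.2 : ℕ) : ℤ) - ((q.2 : ℕ) : ℤ)| = 1

instance {a b : ℕ} (p q : Fin a × Fin b) : Decidable (PawnAdj p q) := by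
  unfold PawnAdj; infer_instance

/-- A set of pawns is nonattacking if no two distinct cells are diagonally adjacent. -/
def Nonatt {a b : ℕ} (S : Finset (Fin a × Fin b)) : Prop :=
  ∀ p ∈ S, ∀ q ∈ S, p ≠ q → ¬ PawnAdj p q

instance {a b : ℕ} (S : Finset (Fin a × Fin b)) : Decidable (Nonatt S) := by
  unfold Nonatt; infer_instance

/-!
Cut the `2a × 2b` board into `a b` blocks of size `2 × 2` and colour the cells by the parity of
`row + column`. Two distinct cells of one block with the same colour are diagonally adjacent, so a
nonattacking set meets each (block, colour) class at most once, giving at most `2 a b` pawns.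
-/

variable {a b : ℕ}

def blockColour (p : Fin (2 * a) × Fin (2 * b)) : Fin a × Fin b × Fin 2 :=
  (⟨(p.1 : ℕ) / 2, by omega⟩, ⟨(p.2 : ℕ) / 2, by omega⟩, ⟨((p.1 : ℕ) + p.2) % 2, by omega⟩)

theorem pawnAdj_of_blockColour_eq {p q : Fin (2 * a) × Fin (2 * b)} (hpq : p ≠ q)
    (h : blockColour p = blockColour q) : PawnAdj p q := by
  obtain ⟨r, c⟩ := p
  obtain ⟨r', c'⟩ := q
  simp only [blockColour, Prod.mk.injEq, Fin.mk.injEq] at h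
  obtain ⟨hr, hc, hcolour⟩ := h
  have hne : (r : ℕ) ≠ r' ∨ (c : ℕ) ≠ c' := by
    by_contra! heq
    exact hpq (Prod.ext (Fin.ext heq.1) (Fin.ext heq.2))
  refine ⟨?_, ?_⟩ <;> dsimp only <;> rw [abs_eq zero_le_one] <;> omega

theorem Nonatt.injOn_blockColour {S : Finset (Fin (2 * a) × Fin (2 * b))} (hS : Nonatt S) :
    Set.InjOn blockColour (S : Set (Fin (2 * a) × Fin (2 * b))) := fun p hp q hq h =>
  by_contra fun hpq => hS p hp q hq hpq (pawnAdj_of_blockColour_eq hpq h)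

theorem Nonatt.card_le {S : Finset (Fin (2 * a) × Fin (2 * b))} (hS : Nonatt S) :
    S.card ≤ 2 * (a * b) := by
  calc S.card = (S.image blockColour).card := (Finset.card_image_of_injOn hS.injOn_blockColour).symm
    _ ≤ Fintype.card (Fin a × Fin b × Fin 2) := Finset.card_le_univ _
    _ = 2 * (a * b) := by simp only [Fintype.card_prod, Fintype.card_fin]; ring

theorem stmt1_general (m : ℕ)
    (S : Finset (Fin (2 * m) × Fin (2 * m))) (hS : Nonatt S) :
    S.card ≤ 2 * m ^ 2 := by
  simpa only [sq] using hS.card_le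

theorem stmt1 (m : ℕ) (hm : 1 ≤ m)
    (S : Finset (Fin (2 * m) × Fin (2 * m))) (hS : Nonatt S) :
    S.card ≤ 2 * m ^ 2 :=
  stmt1_general m S hS
end

section
/- For every m ≥ 1, the number of sets of 2m cells in a 2×2m board with no two cells diagonally adjacent is exactly (m+1)². -/
/-!
Group the columns into the blocks `{2i, 2i+1}`, `i < m`. The two diagonals of a block are
attacking pairs, and these `2m` pairs partition the board, so a nonattacking set of `2m` cells
meets each of them exactly once: `(r, 2i+1)` is occupied iff `(1-r, 2i)` is not. Nonattacking
between neighbouring blocks then says that in each row the occupied even columns form an initial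
segment of blocks, of some length `t r ≤ m`. Conversely each choice of `t : Fin 2 → Fin (m+1)`
gives such a set (`staircase m t`), so there are `(m+1)²` of them.
-/

open Finset

lemma sum_range_two_mul {M : Type*} [AddCommMonoid M] (f : ℕ → M) (m : ℕ) :
    ∑ c ∈ range (2 * m), f c = ∑ i ∈ range m, (f (2 * i) + f (2 * i + 1)) := by
  induction m with
  | zero => simp
  | succ m ih =>
    rw [show 2 * (m + 1) = 2 * m + 1 + 1 by ring, sum_range_succ, sum_range_succ, ih,
      sum_range_succ, add_assoc]

lemma exists_forall_iff_lt_of_antitone {P : ℕ → Prop} (hP : Antitone P) {n : ℕ} (hn : ¬P n) :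
    ∃ k ≤ n, ∀ i, P i ↔ i < k := by
  classical
  have hex : ∃ i, ¬P i := ⟨n, hn⟩
  refine ⟨Nat.find hex, Nat.find_min' hex hn, fun i => ?_⟩
  rw [Nat.lt_find_iff]
  exact ⟨fun h j hj => not_not.2 (hP hj h), fun h => not_not.1 (h i le_rfl)⟩

section Occupied

variable {n : ℕ}

def Occupied (S : Finset (Fin 2 × Fin n)) (r : Fin 2) (c : ℕ) : Prop :=
  ∃ h : c < n, (r, ⟨c, h⟩) ∈ S

instance (S : Finset (Fin 2 × Fin n)) (r : Fin 2) (c : ℕ) : Decidable (Occupied S r c) := by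
  unfold Occupied; infer_instance

variable {S T : Finset (Fin 2 × Fin n)}

lemma occupied_iff_mem {r : Fin 2} {c : Fin n} : Occupied S r c ↔ (r, c) ∈ S :=
  ⟨fun ⟨_, h⟩ => h, fun h => ⟨c.isLt, h⟩⟩

lemma Occupied.lt {r : Fin 2} {c : ℕ} (h : Occupied S r c) : c < n := h.1

lemma ext_occupied (h : ∀ r c, Occupied S r c ↔ Occupied T r c) : S = T := by
  ext ⟨r, c⟩
  rw [← occupied_iff_mem, h, occupied_iff_mem]

lemma nonatt_iff_forall_occupied :
    Nonatt S ↔ ∀ r r' c, r ≠ r' → Occupied S r c → ¬Occupied S r' (c + 1) := by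
  constructor
  · rintro hS r r' c hrr ⟨hc, hp⟩ ⟨hc', hq⟩
    refine hS _ hp _ hq (by simp [Fin.ext_iff]) ⟨?_, by simp⟩
    have := Fin.val_ne_of_ne hrr
    have := r.isLt
    have := r'.isLt
    dsimp only
    rw [abs_eq zero_le_one]
    omega
  · rintro h ⟨r, c⟩ hp ⟨r', c'⟩ hq - ⟨hrow, hcol⟩
    have hrr : r ≠ r' := by rintro rfl; simp at hrow
    dsimp only at hcol
    rw [abs_eq zero_le_one] at hcol
    rcases hcol with hcol | hcol
    · exact h r' r c' hrr.symm (occupied_iff_mem.2 hq) ⟨by omega, by convert hp; omega⟩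
    · exact h r r' c hrr (occupied_iff_mem.2 hp) ⟨by omega, by convert hq; omega⟩

def blockCount (S : Finset (Fin 2 × Fin n)) (i : ℕ) : ℕ :=
  ∑ r : Fin 2,
    ((if Occupied S r (2 * i) then 1 else 0) + if Occupied S r (2 * i + 1) then 1 else 0)

lemma Nonatt.blockCount_le_two (hS : Nonatt S) (i : ℕ) : blockCount S i ≤ 2 := by
  have h01 := nonatt_iff_forall_occupied.1 hS 0 1 (2 * i) (by decide)
  have h10 := nonatt_iff_forall_occupied.1 hS 1 0 (2 * i) (by decide)
  simp only [blockCount, Fin.sum_univ_two]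
  split_ifs <;> simp_all

end Occupied

section Blocks

variable {m : ℕ} {S : Finset (Fin 2 × Fin (2 * m))}

lemma card_eq_sum_blockCount :
    S.card = ∑ i ∈ range m, blockCount S i := by
  calc S.card = ∑ p : Fin 2 × Fin (2 * m), if p ∈ S then 1 else 0 := by simp
    _ = ∑ c ∈ range (2 * m), ∑ r : Fin 2, if Occupied S r c then 1 else 0 := by
      rw [Fintype.sum_prod_type_right, ← Fin.sum_univ_eq_sum_range]
      simp only [occupied_iff_mem]
    _ = ∑ i ∈ range m, blockCount S i := by
      simp only [sum_range_two_mul, blockCount, sum_add_distrib]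

lemma Nonatt.occupied_odd_iff (hS : Nonatt S) (hcard : S.card = 2 * m) {i : ℕ} (hi : i < m)
    {r r' : Fin 2} (hrr : r ≠ r') : Occupied S r' (2 * i + 1) ↔ ¬Occupied S r (2 * i) := by
  have hsum : ∑ i ∈ range m, blockCount S i = ∑ _i ∈ range m, 2 := by
    rw [← card_eq_sum_blockCount, hcard, sum_const, card_range, smul_eq_mul, mul_comm]
  have h2 := (sum_eq_sum_iff_of_le fun i _ => hS.blockCount_le_two i).1 hsum i (mem_range.2 hi)
  have hdiag := nonatt_iff_forall_occupied.1 hS r r' (2 * i) hrr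
  have hdiag' := nonatt_iff_forall_occupied.1 hS r' r (2 * i) hrr.symm
  simp only [blockCount, Fin.sum_univ_two] at h2
  fin_cases r <;> fin_cases r' <;> simp at hrr <;> split_ifs at h2 <;> simp_all

end Blocks

def staircase (m : ℕ) (t : Fin 2 → ℕ) : Finset (Fin 2 × Fin (2 * m)) :=
  univ.filter fun p =>
    if (p.2 : ℕ) % 2 = 0 then (p.2 : ℕ) / 2 < t p.1 else t (1 - p.1) ≤ (p.2 : ℕ) / 2

section Staircase

variable {m : ℕ} {t : Fin 2 → ℕ} {r : Fin 2} {i : ℕ}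

lemma occupied_staircase_even (hi : i < m) : Occupied (staircase m t) r (2 * i) ↔ i < t r := by
  simp [Occupied, staircase, hi]

lemma occupied_staircase_odd (hi : i < m) :
    Occupied (staircase m t) r (2 * i + 1) ↔ t (1 - r) ≤ i := by
  simp [Occupied, staircase]
  omega

lemma nonatt_staircase : Nonatt (staircase m t) := by
  refine nonatt_iff_forall_occupied.2 fun r r' c hrr h h' => ?_
  have hr : 1 - r' = r := by omega
  have hr' : 1 - r = r' := by omega
  obtain ⟨i, rfl | rfl⟩ := Nat.even_or_odd' c
  · rw [occupied_staircase_even (by have := h'.lt; omega)] at h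
    rw [occupied_staircase_odd (by have := h'.lt; omega), hr] at h'
    omega
  · rw [occupied_staircase_odd (by have := h.lt; omega), hr'] at h
    rw [show 2 * i + 1 + 1 = 2 * (i + 1) by ring,
      occupied_staircase_even (by have := h'.lt; omega)] at h'
    omega

lemma card_staircase : (staircase m t).card = 2 * m := by
  rw [card_eq_sum_blockCount, sum_congr rfl fun i hi => ?_, sum_const, card_range, smul_eq_mul,
    mul_comm]
  have hi := mem_range.1 hi
  simp only [blockCount, Fin.sum_univ_two, occupied_staircase_even hi, occupied_staircase_odd hi]
  split_ifs <;> simp_all <;> omega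

lemma staircase_injective :
    Function.Injective fun t : Fin 2 → Fin (m + 1) => staircase m fun r => t r := by
  intro t t' h
  funext r
  have key : ∀ i < m, i < t r ↔ i < t' r := fun i hi => Iff.of_eq <| by
    simpa only [occupied_staircase_even hi] using congrArg (Occupied · r (2 * i)) h
  have := (t r).isLt
  have := (t' r).isLt
  by_contra hne
  rcases Nat.lt_or_gt_of_ne (Fin.val_ne_of_ne hne) with hlt | hlt
  · have := (key (t r) (by omega)).2 hlt
    omega
  · have := (key (t' r) (by omega)).1 hlt
    omega

end Staircase

theorem Nonatt.exists_eq_staircase {m : ℕ} {S : Finset (Fin 2 × Fin (2 * m))} (hS : Nonatt S)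
    (hcard : S.card = 2 * m) : ∃ t : Fin 2 → ℕ, (∀ r, t r ≤ m) ∧ S = staircase m t := by
  have hodd {i : ℕ} (hi : i < m) (r : Fin 2) :
      Occupied S r (2 * i + 1) ↔ ¬Occupied S (1 - r) (2 * i) :=
    hS.occupied_odd_iff hcard hi (by omega)
  have hanti (r : Fin 2) : Antitone fun i => Occupied S r (2 * i) := by
    refine antitone_nat_of_succ_le fun i h => ?_
    have hi : i + 1 < m := by have := h.lt; omega
    by_contra h'
    refine nonatt_iff_forall_occupied.1 hS (1 - r) r (2 * i + 1) (by omega)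
      ((hodd (by omega) (1 - r)).2 (by rwa [sub_sub_cancel])) ?_
    rwa [show 2 * i + 1 + 1 = 2 * (i + 1) by ring]
  choose t htm ht using fun r =>
    exists_forall_iff_lt_of_antitone (hanti r) (n := m) fun h => by have := h.lt; omega
  refine ⟨t, htm, ext_occupied fun r c => ?_⟩
  obtain ⟨i, rfl | rfl⟩ := Nat.even_or_odd' c
  all_goals rcases lt_or_ge i m with hi | hi
  · rw [occupied_staircase_even hi, ht]
  · exact iff_of_false (fun h => by have := h.lt; omega) (fun h => by have := h.lt; omega)
  · rw [occupied_staircase_odd hi, hodd hi, ht, not_lt]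
  · exact iff_of_false (fun h => by have := h.lt; omega) (fun h => by have := h.lt; omega)

theorem stmt3_general (m : ℕ) :
    ((Finset.univ : Finset (Fin 2 × Fin (2 * m))).powerset.filter
        (fun S => S.card = 2 * m ∧ Nonatt S)).card = (m + 1) ^ 2 := by
  have hclass : (univ : Finset (Fin 2 × Fin (2 * m))).powerset.filter
      (fun S => S.card = 2 * m ∧ Nonatt S) =
        univ.image fun t : Fin 2 → Fin (m + 1) => staircase m fun r => t r := by
    ext S
    simp only [mem_filter, mem_powerset, subset_univ, true_and, mem_image, mem_univ]
    constructor
    · rintro ⟨hcard, hS⟩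
      obtain ⟨t, htm, rfl⟩ := hS.exists_eq_staircase hcard
      exact ⟨fun r => ⟨t r, Nat.lt_succ_of_le (htm r)⟩, rfl⟩
    · rintro ⟨t, rfl⟩
      exact ⟨card_staircase, nonatt_staircase⟩
  rw [hclass, card_image_of_injective _ staircase_injective, card_univ, Fintype.card_fun,
    Fintype.card_fin, Fintype.card_fin]

theorem stmt3 (m : ℕ) (hm : 1 ≤ m) :
    ((Finset.univ : Finset (Fin 2 × Fin (2 * m))).powerset.filter
        (fun S => S.card = 2 * m ∧ Nonatt S)).card = (m + 1) ^ 2 :=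
  stmt3_general m
end

section
/- For every m ≥ 1, the number of sets of 2m² cells in a 2m×2m board with no two cells diagonally adjacent is exactly (binomial(2m, m))². -/
/-!
Cut the board into the `n * m` blocks of size `2 × 2`. The two cells of a block that have the
same colour are diagonally adjacent, so a nonattacking set meets each pair (block, colour) at
most once: it has at most `2 n m` cells, and one of that size contains exactly one cell of each
pair. Such a set is determined by its cells in even rows. In every column these form an initial
segment, since a cell in row `2k + 2` attacks the cell of row `2k + 1` that would otherwise
replace the one in row `2k`; comparing neighbouring columns in the same way, the lengths of the
segments decrease along the even columns and increase along the odd ones. Conversely every such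
pair of length functions `Fin m → Fin (n + 1)` yields a maximal nonattacking set, and by stars
and bars there are `(n + m).choose m` monotone (or antitone) ones.
-/

namespace PawnPlacement

open Finset

lemma _root_.Fin.antitone_of_succ_le {α : Type*} [Preorder α] {n : ℕ} {f : Fin n → α}
    (h : ∀ i j : Fin n, (j : ℕ) = i + 1 → f j ≤ f i) : Antitone f := by
  cases n with
  | zero => exact fun i => i.elim0
  | succ n => exact Fin.antitone_iff_succ_le.2 fun i => h _ _ (by simp)

lemma _root_.Fin.monotone_of_le_succ {α : Type*} [Preorder α] {n : ℕ} {f : Fin n → α}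
    (h : ∀ i j : Fin n, (j : ℕ) = i + 1 → f i ≤ f j) : Monotone f := by
  cases n with
  | zero => exact fun i => i.elim0
  | succ n => exact Fin.monotone_iff_le_succ.2 fun i => h _ _ (by simp)

lemma _root_.Fin.mem_iff_lt_card_of_antitone {n : ℕ} {D : Finset (Fin n)}
    (hD : Antitone (· ∈ D)) {k : Fin n} : k ∈ D ↔ (k : ℕ) < #D := by
  conv_rhs => rw [← filter_univ_mem D]
  exact (Fin.lt_card_filter_univ_iff_apply_of_imp (· ∈ D) fun _ _ hji => hD hji).symm

section StarsAndBars

variable {m N : ℕ}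

lemma val_le_val_apply (g : Fin m ↪o Fin N) (i : Fin m) : (i : ℕ) ≤ g i := by
  simpa using card_le_card_of_injOn g (s := Iio i) (t := Iio (g i))
    (fun j hj => by simpa using hj) g.injective.injOn

lemma val_apply_add_le (g : Fin m ↪o Fin N) (i : Fin m) : (g i : ℕ) + m ≤ N + i := by
  have := card_le_card_of_injOn g (s := Ioi i) (t := Ioi (g i))
    (fun j hj => by simpa using hj) g.injective.injOn
  simp only [Fin.card_Ioi] at this
  omega

lemma val_apply_add_le_add (g : Fin m ↪o Fin N) {i j : Fin m} (hij : i ≤ j) :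
    (g i : ℕ) + j ≤ g j + i := by
  have := card_le_card_of_injOn g (s := Ico i j) (t := Ico (g i) (g j))
    (fun k hk => by simpa using hk) g.injective.injOn
  have := g.monotone hij
  simp only [Fin.card_Ico, Fin.le_def] at *
  omega

def monotoneEquivOrderEmbedding (n m : ℕ) :
    {f : Fin m → Fin (n + 1) // Monotone f} ≃ (Fin m ↪o Fin (n + m)) where
  toFun f := OrderEmbedding.ofStrictMono (fun i => ⟨f.1 i + i, by omega⟩) fun i j hij => by
    have := f.2 hij.le
    simp only [Fin.lt_def, Fin.le_def] at hij this ⊢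
    omega
  invFun g := ⟨fun i => ⟨g i - i, by have := val_apply_add_le g i; omega⟩, fun i j hij => by
    have := val_apply_add_le_add g hij
    have := val_le_val_apply g i
    change (g i : ℕ) - i ≤ (g j : ℕ) - j
    omega⟩
  left_inv f := by ext i; exact Nat.add_sub_cancel _ _
  right_inv g := by ext i; simp [val_le_val_apply]

lemma card_monotone (n m : ℕ) :
    #{f : Fin m → Fin (n + 1) | Monotone f} = (n + m).choose m := by
  rw [← Fintype.card_subtype, ← Nat.card_eq_fintype_card,
    Nat.card_congr ((monotoneEquivOrderEmbedding n m).trans Set.powersetCard.ofFinEmbEquiv),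
    Set.powersetCard.card, Nat.card_fin]

lemma card_antitone (n m : ℕ) :
    #{f : Fin m → Fin (n + 1) | Antitone f} = (n + m).choose m := by
  rw [← card_monotone]
  refine card_equiv (Equiv.arrowCongr Fin.revPerm (Equiv.refl _)) fun f => ?_
  simp only [mem_filter, mem_univ, true_and]
  exact ⟨fun h _ _ hij => h (Fin.rev_le_rev.2 hij),
    fun h _ _ hij => by simpa using h (Fin.rev_le_rev.2 hij)⟩

end StarsAndBars

lemma pawnAdj_iff {a b : ℕ} {p q : Fin a × Fin b} :
    PawnAdj p q ↔ ((p.1 : ℕ) + 1 = q.1 ∨ (q.1 : ℕ) + 1 = p.1) ∧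
      ((p.2 : ℕ) + 1 = q.2 ∨ (q.2 : ℕ) + 1 = p.2) := by
  unfold PawnAdj
  rw [abs_eq zero_le_one, abs_eq zero_le_one]
  omega

lemma _root_.PawnAdj.symm {a b : ℕ} {p q : Fin a × Fin b} (h : PawnAdj p q) : PawnAdj q p := by
  rw [pawnAdj_iff] at h ⊢
  omega

lemma _root_.PawnAdj.ne {a b : ℕ} {p q : Fin a × Fin b} (h : PawnAdj p q) : p ≠ q := by
  rintro rfl
  rw [pawnAdj_iff] at h
  omega

variable {n m : ℕ}

/-- The `2 × 2` block containing a cell, and the cell's colour. -/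
def block (p : Fin (2 * n) × Fin (2 * m)) : Fin n × Fin m × Fin 2 :=
  (⟨p.1 / 2, by omega⟩, ⟨p.2 / 2, by omega⟩, ⟨(p.1 + p.2) % 2, by omega⟩)

lemma card_blocks : Fintype.card (Fin n × Fin m × Fin 2) = 2 * (n * m) := by
  simp only [Fintype.card_prod, Fintype.card_fin]
  ring

lemma block_eq_block_iff {p q : Fin (2 * n) × Fin (2 * m)} :
    block p = block q ↔ (p.1 : ℕ) / 2 = q.1 / 2 ∧ (p.2 : ℕ) / 2 = q.2 / 2 ∧
      ((p.1 : ℕ) + p.2) % 2 = (q.1 + q.2) % 2 := by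
  simp [block, Prod.ext_iff, Fin.ext_iff]

lemma pawnAdj_of_block_eq {p q : Fin (2 * n) × Fin (2 * m)} (h : block p = block q)
    (hne : p ≠ q) : PawnAdj p q := by
  rw [block_eq_block_iff] at h
  have : (p.1 : ℕ) ≠ q.1 := fun h' => hne (Prod.ext (Fin.ext h') (Fin.ext (by omega)))
  rw [pawnAdj_iff]
  omega

lemma eq_of_block_eq {p q x : Fin (2 * n) × Fin (2 * m)} (hp : block x = block p)
    (hq : block x = block q) (hpq : p ≠ q) (hxq : x ≠ q) : x = p := by
  rw [block_eq_block_iff] at hp hq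
  have hxq' : (x.1 : ℕ) ≠ q.1 := fun h => hxq (Prod.ext (Fin.ext h) (Fin.ext (by omega)))
  have hpq' : (p.1 : ℕ) ≠ q.1 := fun h => hpq (Prod.ext (Fin.ext h) (Fin.ext (by omega)))
  exact Prod.ext (Fin.ext (by omega)) (Fin.ext (by omega))

def evenCol (i : Fin m) : Fin (2 * m) := ⟨2 * i, by omega⟩

def oddCol (i : Fin m) : Fin (2 * m) := ⟨2 * i + 1, by omega⟩

/-- The column of the even-row cell that shares a block and a colour with `p`. -/
def topCol (p : Fin (2 * n) × Fin (2 * m)) : Fin (2 * m) :=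
  ⟨2 * (p.2 / 2) + (p.1 + p.2) % 2, by omega⟩

def evenRows (S : Finset (Fin (2 * n) × Fin (2 * m))) (col : Fin (2 * m)) : Finset (Fin n) :=
  {k | ((⟨2 * k, by omega⟩ : Fin (2 * n)), col) ∈ S}

def evenRowCount (S : Finset (Fin (2 * n) × Fin (2 * m))) (col : Fin (2 * m)) : Fin (n + 1) :=
  ⟨#(evenRows S col), Nat.lt_succ_of_le ((card_le_univ _).trans_eq (Fintype.card_fin n))⟩

def thresholds (S : Finset (Fin (2 * n) × Fin (2 * m))) :
    (Fin m → Fin (n + 1)) × (Fin m → Fin (n + 1)) :=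
  (fun i => evenRowCount S (evenCol i), fun i => evenRowCount S (oddCol i))

/-- Of the two cells of a block and colour, the one in the even row is taken exactly when its
block row lies below the threshold of its column: `a` on the even columns, `c` on the odd ones. -/
def pattern (a c : Fin m → Fin (n + 1)) : Finset (Fin (2 * n) × Fin (2 * m)) :=
  {p | ((p.1 : ℕ) % 2 = 0 ↔ (p.1 : ℕ) / 2 <
    ((if ((p.1 : ℕ) + p.2) % 2 = 0 then a else c) ⟨p.2 / 2, by omega⟩ : ℕ))}

lemma mem_pattern {a c : Fin m → Fin (n + 1)} {p : Fin (2 * n) × Fin (2 * m)} :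
    p ∈ pattern a c ↔ ((p.1 : ℕ) % 2 = 0 ↔ (p.1 : ℕ) / 2 <
      ((if ((p.1 : ℕ) + p.2) % 2 = 0 then a else c) ⟨p.2 / 2, by omega⟩ : ℕ)) := by
  simp [pattern]

section MaximalSets

variable {S : Finset (Fin (2 * n) × Fin (2 * m))}

lemma _root_.Nonatt.injOn_block (hS : Nonatt S) :
    Set.InjOn block (S : Set (Fin (2 * n) × Fin (2 * m))) := fun p hp q hq h =>
  by_contra fun hne => hS p hp q hq hne (pawnAdj_of_block_eq h hne)

lemma _root_.Nonatt.card_le_s4 (hS : Nonatt S) : #S ≤ 2 * (n * m) :=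
  card_blocks (n := n) (m := m) ▸
    card_le_card_of_injOn block (t := univ) (fun _ _ => mem_univ _) hS.injOn_block

/-- In a nonattacking set of maximal size every block contains exactly one cell of each colour. -/
lemma _root_.Nonatt.mem_iff_not_mem (hS : Nonatt S) (hcard : #S = 2 * (n * m))
    {p q : Fin (2 * n) × Fin (2 * m)} (h : block p = block q) (hne : p ≠ q) :
    p ∈ S ↔ q ∉ S := by
  refine ⟨fun hp hq => hS p hp q hq hne (pawnAdj_of_block_eq h hne), fun hq => ?_⟩
  obtain ⟨x, hx, hxp⟩ := surjOn_of_injOn_of_card_le block (t := univ) (fun _ _ => mem_univ _)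
    hS.injOn_block (by rw [card_univ, card_blocks, hcard]) (mem_univ (block p))
  rwa [← eq_of_block_eq hxp (hxp.trans h) hne (by rintro rfl; exact hq hx)]

lemma _root_.Nonatt.mem_of_pawnAdj (hS : Nonatt S) (hcard : #S = 2 * (n * m))
    {t u x : Fin (2 * n) × Fin (2 * m)} (htu : block t = block u) (hne : t ≠ u) (hx : x ∈ S)
    (hxu : PawnAdj x u) : t ∈ S :=
  (hS.mem_iff_not_mem hcard htu hne).2 fun hu => hS x hx u hu hxu.ne hxu

lemma _root_.Nonatt.mem_evenRows_of_succ (hS : Nonatt S) (hcard : #S = 2 * (n * m))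
    {col : Fin (2 * m)} {k l : Fin n} (hkl : (l : ℕ) = k + 1) (hl : l ∈ evenRows S col) :
    k ∈ evenRows S col := by
  simp only [evenRows, mem_filter, mem_univ, true_and] at hl ⊢
  refine hS.mem_of_pawnAdj hcard
    (u := (⟨2 * k + 1, by omega⟩, ⟨col + 1 - 2 * (col % 2), by omega⟩)) ?_ ?_ hl ?_
  · rw [block_eq_block_iff]; dsimp only; omega
  · simp [Prod.ext_iff, Fin.ext_iff]
  · rw [pawnAdj_iff]; dsimp only; omega

lemma _root_.Nonatt.evenRows_evenCol_subset (hS : Nonatt S) (hcard : #S = 2 * (n * m))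
    {i j : Fin m} (hij : (j : ℕ) = i + 1) :
    evenRows S (evenCol j) ⊆ evenRows S (evenCol i) := by
  intro k hk
  simp only [evenRows, mem_filter, mem_univ, true_and] at hk ⊢
  refine hS.mem_of_pawnAdj hcard (u := (⟨2 * k + 1, by omega⟩, oddCol i)) ?_ ?_ hk ?_
  · rw [block_eq_block_iff]; dsimp only [oddCol, evenCol]; omega
  · simp [Prod.ext_iff, Fin.ext_iff]
  · rw [pawnAdj_iff]; dsimp only [oddCol, evenCol]; omega

lemma _root_.Nonatt.evenRows_oddCol_subset (hS : Nonatt S) (hcard : #S = 2 * (n * m))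
    {i j : Fin m} (hij : (j : ℕ) = i + 1) :
    evenRows S (oddCol i) ⊆ evenRows S (oddCol j) := by
  intro k hk
  simp only [evenRows, mem_filter, mem_univ, true_and] at hk ⊢
  refine hS.mem_of_pawnAdj hcard (u := (⟨2 * k + 1, by omega⟩, evenCol j)) ?_ ?_ hk ?_
  · rw [block_eq_block_iff]; dsimp only [oddCol, evenCol]; omega
  · simp [Prod.ext_iff, Fin.ext_iff]
  · rw [pawnAdj_iff]; dsimp only [oddCol, evenCol]; omega

lemma _root_.Nonatt.mem_evenRows_iff (hS : Nonatt S) (hcard : #S = 2 * (n * m))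
    {col : Fin (2 * m)} {k : Fin n} : k ∈ evenRows S col ↔ (k : ℕ) < evenRowCount S col :=
  Fin.mem_iff_lt_card_of_antitone <|
    Fin.antitone_of_succ_le fun _ _ => hS.mem_evenRows_of_succ hcard

lemma _root_.Nonatt.mem_iff_lt_evenRowCount (hS : Nonatt S) (hcard : #S = 2 * (n * m))
    (p : Fin (2 * n) × Fin (2 * m)) :
    p ∈ S ↔ ((p.1 : ℕ) % 2 = 0 ↔ (p.1 : ℕ) / 2 < evenRowCount S (topCol p)) := by
  have htop := hS.mem_evenRows_iff hcard (col := topCol p) (k := ⟨p.1 / 2, by omega⟩)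
  simp only [evenRows, mem_filter, mem_univ, true_and] at htop
  rw [← htop]
  set t : Fin (2 * n) × Fin (2 * m) := (⟨2 * (p.1 / 2), by omega⟩, topCol p)
  by_cases hp : (p.1 : ℕ) % 2 = 0
  · have : t = p := by simp only [t, topCol, Prod.ext_iff, Fin.ext_iff]; omega
    simp [hp, this]
  · have hne : p ≠ t := by simp only [t, Ne, Prod.ext_iff, Fin.ext_iff]; omega
    have hblock : block p = block t := by
      rw [block_eq_block_iff]; dsimp only [t, topCol]; omega
    simp [hp, hS.mem_iff_not_mem hcard hblock hne]

lemma _root_.Nonatt.antitone_thresholds_fst (hS : Nonatt S) (hcard : #S = 2 * (n * m)) :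
    Antitone (thresholds S).1 :=
  Fin.antitone_of_succ_le fun _ _ hij =>
    Fin.mk_le_mk.2 (card_le_card (hS.evenRows_evenCol_subset hcard hij))

lemma _root_.Nonatt.monotone_thresholds_snd (hS : Nonatt S) (hcard : #S = 2 * (n * m)) :
    Monotone (thresholds S).2 :=
  Fin.monotone_of_le_succ fun _ _ hij =>
    Fin.mk_le_mk.2 (card_le_card (hS.evenRows_oddCol_subset hcard hij))

lemma _root_.Nonatt.pattern_thresholds (hS : Nonatt S) (hcard : #S = 2 * (n * m)) :
    pattern (thresholds S).1 (thresholds S).2 = S := by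
  ext p
  rw [hS.mem_iff_lt_evenRowCount hcard p, mem_pattern]
  have : topCol p = if ((p.1 : ℕ) + p.2) % 2 = 0 then evenCol ⟨p.2 / 2, by omega⟩
      else oddCol ⟨p.2 / 2, by omega⟩ := by
    split_ifs <;> simp only [topCol, evenCol, oddCol, Fin.ext_iff] <;> omega
  rw [this]
  split_ifs <;> rfl

end MaximalSets

section Patterns

variable {a c : Fin m → Fin (n + 1)}

lemma evenRows_pattern_evenCol (i : Fin m) :
    evenRows (pattern a c) (evenCol i) = ({k | (k : ℕ) < a i} : Finset (Fin n)) := by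
  ext k
  simp [evenRows, mem_pattern, evenCol]

lemma evenRows_pattern_oddCol (i : Fin m) :
    evenRows (pattern a c) (oddCol i) = ({k | (k : ℕ) < c i} : Finset (Fin n)) := by
  ext k
  have : (⟨(2 * i + 1 : ℕ) / 2, by omega⟩ : Fin m) = i := Fin.ext (by simp; omega)
  simp [evenRows, mem_pattern, oddCol, this]

lemma thresholds_pattern : thresholds (pattern a c) = (a, c) := by
  ext i
  · show #(evenRows (pattern a c) (evenCol i)) = a i
    rw [evenRows_pattern_evenCol, Fin.card_filter_val_lt, min_eq_right (Fin.is_le _)]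
  · show #(evenRows (pattern a c) (oddCol i)) = c i
    rw [evenRows_pattern_oddCol, Fin.card_filter_val_lt, min_eq_right (Fin.is_le _)]

lemma nonatt_pattern (ha : Antitone a) (hc : Monotone c) : Nonatt (pattern a c) := by
  intro p hp q hq hne hadj
  wlog hrow : (q.1 : ℕ) = p.1 + 1 generalizing p q
  · exact this q hq p hp hne.symm hadj.symm (by rw [pawnAdj_iff] at hadj; omega)
  rw [mem_pattern] at hp hq
  rw [pawnAdj_iff] at hadj
  have key : ∀ i j : Fin m, (i : ℕ) ≤ j → (a j : ℕ) ≤ a i ∧ (c i : ℕ) ≤ c j :=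
    fun i j h => ⟨ha (Fin.le_def.2 h), hc (Fin.le_def.2 h)⟩
  have hpq := key ⟨p.2 / 2, by omega⟩ ⟨q.2 / 2, by omega⟩
  have hqp := key ⟨q.2 / 2, by omega⟩ ⟨p.2 / 2, by omega⟩
  simp only at hpq hqp
  split_ifs at hp hq <;> omega

lemma card_pattern (ha : Antitone a) (hc : Monotone c) : #(pattern a c) = 2 * (n * m) := by
  refine le_antisymm (nonatt_pattern ha hc).card_le_s4 ?_
  rw [← card_blocks, ← card_univ]
  refine card_le_card_of_surjOn block fun b _ => ?_
  obtain ⟨k, i, e⟩ := b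
  obtain ⟨r, hr⟩ : ∃ r : ℕ,
      (r = 2 * k ∧ k < ((if (e : ℕ) = 0 then a else c) i : ℕ)) ∨
      (r = 2 * k + 1 ∧ ((if (e : ℕ) = 0 then a else c) i : ℕ) ≤ k) := by
    by_cases h : (k : ℕ) < ((if (e : ℕ) = 0 then a else c) i : ℕ)
    exacts [⟨_, .inl ⟨rfl, h⟩⟩, ⟨_, .inr ⟨rfl, by omega⟩⟩]
  have hcol : (⟨(2 * i + (r + e) % 2) / 2, by omega⟩ : Fin m) = i := Fin.ext (by simp; omega)
  refine ⟨(⟨r, by omega⟩, ⟨2 * i + (r + e) % 2, by omega⟩), ?_, ?_⟩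
  · rw [mem_coe, mem_pattern]
    dsimp only
    rw [hcol]
    split_ifs at hr ⊢ <;> omega
  · simp only [block, Prod.ext_iff, Fin.ext_iff]
    omega

end Patterns

theorem card_maximal_nonatt (n m : ℕ) :
    #((univ : Finset (Fin (2 * n) × Fin (2 * m))).powerset.filter
        fun S => #S = 2 * (n * m) ∧ Nonatt S) = (n + m).choose m ^ 2 := by
  rw [sq]
  nth_rw 1 [← card_antitone n m]
  rw [← card_monotone n m, ← card_product, eq_comm]
  refine card_nbij' (fun θ => pattern θ.1 θ.2) thresholds (fun θ hθ => ?_) (fun S hS => ?_)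
    (fun θ _ => thresholds_pattern) (fun S hS => ?_)
  · simp only [coe_product, coe_filter, mem_univ, true_and, Set.mem_prod,
      Set.mem_ofPred_eq] at hθ
    simp [card_pattern hθ.1 hθ.2, nonatt_pattern hθ.1 hθ.2]
  · simp only [powerset_univ, coe_filter, mem_univ, true_and, Set.mem_ofPred_eq] at hS
    simp [hS.2.antitone_thresholds_fst hS.1, hS.2.monotone_thresholds_snd hS.1]
  · simp only [powerset_univ, coe_filter, mem_univ, true_and, Set.mem_ofPred_eq] at hS
    exact hS.2.pattern_thresholds hS.1

end PawnPlacement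

theorem stmt4_general (m : ℕ) :
    ((Finset.univ : Finset (Fin (2 * m) × Fin (2 * m))).powerset.filter
        (fun S => S.card = 2 * m ^ 2 ∧ Nonatt S)).card = (Nat.choose (2 * m) m) ^ 2 := by
  have := PawnPlacement.card_maximal_nonatt m m
  rwa [← sq, ← two_mul] at this

theorem stmt4 (m : ℕ) (hm : 1 ≤ m) :
    ((Finset.univ : Finset (Fin (2 * m) × Fin (2 * m))).powerset.filter
        (fun S => S.card = 2 * m ^ 2 ∧ Nonatt S)).card = (Nat.choose (2 * m) m) ^ 2 :=
  stmt4_general m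
end

section
/- In any maximum nonattacking arrangement of 2m pawns on a 2×2m board, each of the m consecutive 2×2 blocks (columns 2k and 2k+1) contains exactly 2 pawns. -/
/-!
The four cells of two adjacent columns of a two-row board form two attacking diagonal pairs, so a
nonattacking set meets each 2×2 block in at most 2 cells. The m blocks partition the board, so a
set of 2m pawns must meet every block in exactly 2.
-/

open Finset

lemma pawnAdj_of_mem_two_cols {n c : ℕ} {p q : Fin 2 × Fin n} (hne : p ≠ q)
    (hp : (p.2 : ℕ) = c ∨ (p.2 : ℕ) = c + 1) (hq : (q.2 : ℕ) = c ∨ (q.2 : ℕ) = c + 1)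
    (hpar : ((p.1 : ℕ) + p.2) % 2 = ((q.1 : ℕ) + q.2) % 2) : PawnAdj p q := by
  have hne' : ¬((p.1 : ℕ) = q.1 ∧ (p.2 : ℕ) = q.2) := fun ⟨h1, h2⟩ =>
    hne (Prod.ext (Fin.ext h1) (Fin.ext h2))
  have := p.1.isLt
  have := q.1.isLt
  constructor <;> rw [abs_eq zero_le_one] <;> omega

lemma Nonatt.card_filter_two_cols_le_two {n : ℕ} {S : Finset (Fin 2 × Fin n)} (hS : Nonatt S)
    (c : ℕ) : (S.filter fun p => (p.2 : ℕ) = c ∨ (p.2 : ℕ) = c + 1).card ≤ 2 := by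
  calc (S.filter fun p => (p.2 : ℕ) = c ∨ (p.2 : ℕ) = c + 1).card
      ≤ (range 2).card := by
        refine card_le_card_of_injOn (fun p => ((p.1 : ℕ) + p.2) % 2)
          (fun p _ => mem_range.2 (Nat.mod_lt _ two_pos)) ?_
        intro p hp q hq hpar
        simp only [coe_filter, Set.mem_ofPred_eq] at hp hq
        by_contra hne
        exact hS p hp.1 q hq.1 hne (pawnAdj_of_mem_two_cols hne hp.2 hq.2 hpar)
    _ = 2 := card_range 2

lemma card_eq_sum_card_blocks {a m : ℕ} (S : Finset (Fin a × Fin (2 * m))) :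
    S.card = ∑ j ∈ range m,
      (S.filter fun p => (p.2 : ℕ) = 2 * j ∨ (p.2 : ℕ) = 2 * j + 1).card := by
  rw [card_eq_sum_card_fiberwise (f := fun p => (p.2 : ℕ) / 2) (t := range m)
    fun p _ => mem_range.2 (Nat.div_lt_of_lt_mul p.2.isLt)]
  refine sum_congr rfl fun j _ => congrArg card (filter_congr fun p _ => ?_)
  omega

theorem stmt8_general (m : ℕ) (S : Finset (Fin 2 × Fin (2 * m)))
    (hcard : S.card = 2 * m) (hS : Nonatt S) (k : ℕ) (hk : k < m) :
    (S.filter (fun p => (p.2 : ℕ) = 2 * k ∨ (p.2 : ℕ) = 2 * k + 1)).card = 2 := by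
  have hsum : ∑ j ∈ range m,
      (S.filter fun p => (p.2 : ℕ) = 2 * j ∨ (p.2 : ℕ) = 2 * j + 1).card = ∑ _j ∈ range m, 2 := by
    rw [← card_eq_sum_card_blocks, hcard, sum_const, card_range, smul_eq_mul, mul_comm]
  exact (sum_eq_sum_iff_of_le fun j _ => hS.card_filter_two_cols_le_two (2 * j)).1 hsum k
    (mem_range.2 hk)

theorem stmt8 (m : ℕ) (hm : 1 ≤ m) (S : Finset (Fin 2 × Fin (2 * m)))
    (hcard : S.card = 2 * m) (hS : Nonatt S) (k : ℕ) (hk : k < m) :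
    (S.filter (fun p => (p.2 : ℕ) = 2 * k ∨ (p.2 : ℕ) = 2 * k + 1)).card = 2 :=
  stmt8_general m S hcard hS k hk
end

section
/- If S is a nonattacking arrangement of 2mn pawns on a 2n×2m board, then each horizontal strip of two consecutive rows (rows 2i, 2i+1) contains exactly 2m pawns of S. -/
open Finset

theorem pawnAdj_of_same_block_of_same_colour {a b : ℕ} {p q : Fin a × Fin b} (hpq : p ≠ q)
    (hrow : (p.1 : ℕ) / 2 = (q.1 : ℕ) / 2) (hcol : (p.2 : ℕ) / 2 = (q.2 : ℕ) / 2)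
    (hcolour : ((p.1 : ℕ) + p.2) % 2 = ((q.1 : ℕ) + q.2) % 2) : PawnAdj p q := by
  have hne : (p.1 : ℕ) ≠ q.1 ∨ (p.2 : ℕ) ≠ q.2 := by
    by_contra! h
    exact hpq (Prod.ext (Fin.ext h.1) (Fin.ext h.2))
  refine ⟨?_, ?_⟩ <;> rw [abs_eq zero_le_one] <;> omega

namespace Nonatt

variable {a b : ℕ} {S : Finset (Fin a × Fin b)}

theorem card_block_le_two (hS : Nonatt S) (k j : ℕ) :
    (S.filter (fun p => (p.1 : ℕ) / 2 = k ∧ (p.2 : ℕ) / 2 = j)).card ≤ 2 := by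
  simpa using card_le_card_of_injOn (t := range 2) (fun p => ((p.1 : ℕ) + p.2) % 2)
    (fun p _ => mem_range.mpr (Nat.mod_lt _ two_pos)) fun p hp q hq hcolour => by
      simp only [coe_filter, Set.mem_ofPred_eq] at hp hq
      by_contra hpq
      exact hS p hp.1 q hq.1 hpq <| pawnAdj_of_same_block_of_same_colour hpq
        (hp.2.1.trans hq.2.1.symm) (hp.2.2.trans hq.2.2.symm) hcolour

theorem card_strip_le {m : ℕ} {S : Finset (Fin a × Fin (2 * m))} (hS : Nonatt S) (k : ℕ) :
    (S.filter (fun p => (p.1 : ℕ) / 2 = k)).card ≤ 2 * m := by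
  rw [card_eq_sum_card_fiberwise (f := fun p => (p.2 : ℕ) / 2) (t := range m)
    fun p _ => mem_range.mpr (by have := p.2.isLt; dsimp only; omega)]
  calc ∑ j ∈ range m, ((S.filter (fun p => (p.1 : ℕ) / 2 = k)).filter
          (fun p => (p.2 : ℕ) / 2 = j)).card
      ≤ ∑ _j ∈ range m, 2 := sum_le_sum fun j _ => by
        rw [filter_filter]
        exact hS.card_block_le_two k j
    _ = 2 * m := by rw [sum_const, card_range, smul_eq_mul, mul_comm]

end Nonatt

theorem card_eq_sum_card_strip {n b : ℕ} (S : Finset (Fin (2 * n) × Fin b)) :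
    S.card = ∑ k ∈ range n, (S.filter (fun p => (p.1 : ℕ) / 2 = k)).card :=
  card_eq_sum_card_fiberwise fun p _ => mem_range.mpr (by have := p.1.isLt; omega)

theorem stmt11_general (m n : ℕ)
    (S : Finset (Fin (2 * n) × Fin (2 * m)))
    (hcard : S.card = 2 * m * n) (hS : Nonatt S) (i : ℕ) (hi : i < n) :
    (S.filter (fun p => (p.1 : ℕ) = 2 * i ∨ (p.1 : ℕ) = 2 * i + 1)).card = 2 * m := by
  have htotal : ∑ k ∈ range n, (S.filter (fun p => (p.1 : ℕ) / 2 = k)).card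
      = ∑ _k ∈ range n, 2 * m := by
    rw [← card_eq_sum_card_strip, hcard, sum_const, card_range, smul_eq_mul, mul_comm]
  have hstrip : S.filter (fun p => (p.1 : ℕ) = 2 * i ∨ (p.1 : ℕ) = 2 * i + 1)
      = S.filter (fun p => (p.1 : ℕ) / 2 = i) :=
    filter_congr fun p _ => by omega
  rw [hstrip]
  exact (sum_eq_sum_iff_of_le fun k _ => hS.card_strip_le k).mp htotal i (mem_range.mpr hi)

theorem stmt11 (m n : ℕ) (hm : 1 ≤ m) (hn : 1 ≤ n)
    (S : Finset (Fin (2 * n) × Fin (2 * m)))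
    (hcard : S.card = 2 * m * n) (hS : Nonatt S) (i : ℕ) (hi : i < n) :
    (S.filter (fun p => (p.1 : ℕ) = 2 * i ∨ (p.1 : ℕ) = 2 * i + 1)).card = 2 * m :=
  stmt11_general m n S hcard hS i hi
end

section
/- For the 4×4 board, the number of 8-element sets of cells with no two cells diagonally adjacent is exactly 36 (= binomial(4,2)²). -/
/-!
A diagonal step changes both coordinates by one, so it preserves the parity of their sum: the
attack graph splits into the light and the dark squares, and a nonattacking set is exactly a
nonattacking set of light squares together with one of dark squares. Counting by the number of
light squares turns the count into a convolution of counts on the two 8-cell colour classes. On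
the 4 × 4 board each class has 6 nonattacking 4-sets and none larger, so only 4 + 4 contributes.
-/

open Finset

variable {a b : ℕ}

def IsLight (p : Fin a × Fin b) : Prop := ((p.1 : ℕ) + p.2) % 2 = 0

instance (p : Fin a × Fin b) : Decidable (IsLight p) := inferInstanceAs (Decidable (_ = _))

lemma PawnAdj.isLight_iff {p q : Fin a × Fin b} (h : PawnAdj p q) : IsLight p ↔ IsLight q := by
  obtain ⟨h₁, h₂⟩ := h
  rw [abs_eq zero_le_one] at h₁ h₂
  unfold IsLight
  omega

lemma Nonatt.mono {S T : Finset (Fin a × Fin b)} (hT : Nonatt T) (h : S ⊆ T) : Nonatt S :=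
  fun p hp q hq => hT p (h hp) q (h hq)

lemma Nonatt.union {A B : Finset (Fin a × Fin b)} (hA : Nonatt A) (hB : Nonatt B)
    (hAl : ∀ p ∈ A, IsLight p) (hBd : ∀ q ∈ B, ¬ IsLight q) : Nonatt (A ∪ B) := by
  intro p hp q hq hpq hadj
  rcases mem_union.mp hp with hpA | hpB <;> rcases mem_union.mp hq with hqA | hqB
  · exact hA p hpA q hqA hpq hadj
  · exact hBd q hqB (hadj.isLight_iff.mp (hAl p hpA))
  · exact hBd p hpB (hadj.isLight_iff.mpr (hAl q hqA))
  · exact hB p hpB q hqB hpq hadj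

def nonattOfCard (s : Finset (Fin a × Fin b)) (n : ℕ) : Finset (Finset (Fin a × Fin b)) :=
  s.powerset.filter (fun S => S.card = n ∧ Nonatt S)

def lightCells (a b : ℕ) : Finset (Fin a × Fin b) := univ.filter IsLight

def darkCells (a b : ℕ) : Finset (Fin a × Fin b) := univ.filter (¬ IsLight ·)

lemma mem_nonattOfCard {s S : Finset (Fin a × Fin b)} {n : ℕ} :
    S ∈ nonattOfCard s n ↔ S ⊆ s ∧ #S = n ∧ Nonatt S := by
  simp only [nonattOfCard, mem_filter, mem_powerset]

lemma subset_lightCells {A : Finset (Fin a × Fin b)} : A ⊆ lightCells a b ↔ ∀ p ∈ A, IsLight p := by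
  simp [subset_iff, lightCells]

lemma subset_darkCells {B : Finset (Fin a × Fin b)} :
    B ⊆ darkCells a b ↔ ∀ p ∈ B, ¬ IsLight p := by
  simp [subset_iff, darkCells]

lemma card_nonattOfCard_filter_card_light {n k : ℕ} (hk : k ≤ n) :
    #{S ∈ nonattOfCard (univ : Finset (Fin a × Fin b)) n | #{p ∈ S | IsLight p} = k} =
      #(nonattOfCard (lightCells a b) k) * #(nonattOfCard (darkCells a b) (n - k)) := by
  rw [← card_product]
  refine card_nbij' (fun S => ({p ∈ S | IsLight p}, {p ∈ S | ¬ IsLight p}))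
    (fun AB => AB.1 ∪ AB.2) ?_ ?_ ?_ ?_
  · intro S hS
    simp only [coe_filter, Set.mem_ofPred_eq, mem_nonattOfCard] at hS
    obtain ⟨⟨-, hcard, hS⟩, hk⟩ := hS
    simp only [coe_product, Set.mem_prod, mem_coe, mem_nonattOfCard]
    refine ⟨⟨filter_subset_filter _ (subset_univ S), hk, hS.mono (filter_subset _ _)⟩,
      ⟨filter_subset_filter _ (subset_univ S), ?_, hS.mono (filter_subset _ _)⟩⟩
    rw [← hcard, ← hk, ← card_filter_add_card_filter_not (s := S) IsLight, Nat.add_sub_cancel_left]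
  · rintro ⟨A, B⟩ hAB
    simp only [coe_product, Set.mem_prod, mem_coe, mem_nonattOfCard, subset_lightCells,
      subset_darkCells] at hAB
    obtain ⟨⟨hAl, hAk, hA⟩, ⟨hBd, hBk, hB⟩⟩ := hAB
    simp only [coe_filter, Set.mem_ofPred_eq, mem_nonattOfCard, subset_univ, true_and]
    rw [filter_union, filter_true_of_mem hAl, filter_false_of_mem hBd, union_empty,
      card_union_of_disjoint (disjoint_left.mpr fun p hpA hpB => hBd p hpB (hAl p hpA))]
    exact ⟨⟨by omega, hA.union hB hAl hBd⟩, hAk⟩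
  · intro S _
    exact filter_union_filter_not_eq _ S
  · rintro ⟨A, B⟩ hAB
    simp only [coe_product, Set.mem_prod, mem_coe, mem_nonattOfCard, subset_lightCells,
      subset_darkCells] at hAB
    obtain ⟨⟨hAl, -, -⟩, ⟨hBd, -, -⟩⟩ := hAB
    simp only [filter_union, filter_true_of_mem hAl, filter_false_of_mem hBd, union_empty,
      empty_union, filter_false_of_mem fun p hp => not_not.mpr (hAl p hp),
      filter_true_of_mem hBd]

theorem card_nonattOfCard_univ (n : ℕ) :
    #(nonattOfCard (univ : Finset (Fin a × Fin b)) n) =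
      ∑ k ∈ range (n + 1),
        #(nonattOfCard (lightCells a b) k) * #(nonattOfCard (darkCells a b) (n - k)) := by
  rw [card_eq_sum_card_fiberwise (f := fun S => #{p ∈ S | IsLight p}) (t := range (n + 1))]
  · exact sum_congr rfl fun k hk =>
      card_nonattOfCard_filter_card_light (Nat.lt_succ_iff.mp (mem_range.mp hk))
  · intro S hS
    rw [mem_coe, mem_nonattOfCard] at hS
    rw [mem_coe, mem_range]
    exact Nat.lt_succ_of_le (hS.2.1 ▸ card_filter_le _ _)

theorem stmt15 :
    ((Finset.univ : Finset (Fin 4 × Fin 4)).powerset.filter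
        (fun S => S.card = 8 ∧ Nonatt S)).card = 36 := by
  rw [← nonattOfCard, card_nonattOfCard_univ]
  decide
end
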